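/- Work with the model (𝒦,r) = (𝒦_s,r_s) for s sufficiently large and a constant C chosen sufficiently large depending on s. For every u ∈ 𝒬 ∖ 𝒮 and every non-degenerate droplet D with u-extension D', we have [D]_{D'∖D} ⊇ D' ∩ ℤ². For every u ∈ 𝒮, every non-degenerate droplet D with u-extension D', and every x ∈ ((((D'∖D) ∩ ℤ²) + 𝒦) ∖ D), we have [{x} ∪ D]_{D'∖D} ⊇ D' ∩ ℤ². -/

import Mathlib

open Set MeasureTheory Filter
open scoped RealInnerProductSpace Pointwise ENNReal

noncomputable section

/-- The Euclidean plane. -/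
abbrev E : Type := EuclideanSpace ℝ (Fin 2)

/-- The point of the plane with coordinates `(a, b)`. -/
def pt (a b : ℝ) : E := (WithLp.equiv 2 (Fin 2 → ℝ)).symm ![a, b]

/-- The integer lattice `ℤ²` viewed inside the plane. -/
def latt : Set E := {x : E | ∃ a b : ℤ, x = pt a b}

/-- One step of threshold bootstrap percolation on `ℤ²` with neighbourhood `𝒦` and threshold `r`. -/
def step (𝒦 : Set E) (r : ℕ) (A : Set E) : Set E :=
  A ∪ {x : E | x ∈ latt ∧ r ≤ (((fun k => x + k) '' 𝒦) ∩ A).ncard}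

/-- The bootstrap percolation closure `[A]` (of the lattice points of `A`). -/
def bpCl (𝒦 : Set E) (r : ℕ) (A : Set E) : Set E :=
  ⋃ t : ℕ, (step 𝒦 r)^[t] (A ∩ latt)

/-- One step of the bootstrap percolation dynamics restricted to the region `B`. -/
def stepIn (𝒦 : Set E) (r : ℕ) (B A : Set E) : Set E :=
  A ∪ {x : E | x ∈ B ∩ latt ∧ r ≤ (((fun k => x + k) '' 𝒦) ∩ A).ncard}

/-- The closure `[A]_B` of `A` under the dynamics restricted to `B`. -/
def bpClIn (𝒦 : Set E) (r : ℕ) (B A : Set E) : Set E :=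
  ⋃ t : ℕ, (stepIn 𝒦 r B)^[t] (A ∩ latt)

/-- Rotation of the plane by `π/2` around the origin. -/
def rot (x : E) : E := pt (-(x 1)) (x 0)

/-- A "nice" set `K`: convex, invariant under rotation by `π/2` about the origin,
with `max {‖k‖ : k ∈ K} = 1`. -/
structure NiceK (K : Set E) : Prop where
  convex : Convex ℝ K
  rotInv : ∀ x ∈ K, rot x ∈ K
  normMax : IsGreatest ((fun k : E => ‖k‖) '' K) 1

/-- The neighbourhood `𝒦_s = (sK) ∩ ℤ²`. -/
def Ks (K : Set E) (s : ℝ) : Set E := (s • K) ∩ latt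

/-- The threshold `r_s = 1 + min_{u ≠ 0} |{x ∈ 𝒦_s : ⟨x,u⟩ < 0}|`. -/
def rKs (K : Set E) (s : ℝ) : ℕ :=
  1 + sInf ((fun u : E => {x : E | x ∈ Ks K s ∧ (inner ℝ x u : ℝ) < 0}.ncard) '' {u : E | u ≠ 0})

/-- The neighbourhood `𝒦_□` of the two-neighbour model. -/
def Ksq : Set E := {pt 0 0, pt 1 0, pt (-1) 0, pt 0 1, pt 0 (-1)}

/-- The neighbourhood `𝒦_△` of the three-neighbour model on the triangular lattice. -/
def Ktri : Set E := Ksq ∪ {pt 1 (-1), pt (-1) 1}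

/-- The set `𝒮` of stable directions of the model `(𝒦, r)`. -/
def stableDirs (𝒦 : Set E) (r : ℕ) : Set E :=
  {u : E | ‖u‖ = 1 ∧ {x : E | x ∈ 𝒦 ∧ (inner ℝ x u : ℝ) < 0}.ncard < r}

/-- The box `Λ_t = [-t,t]² ∩ ℤ²`. -/
def lam (t : ℝ) : Set E := {x ∈ latt | |x 0| ≤ t ∧ |x 1| ≤ t}

/-- A set `V` is `κ`-connected if any two of its points are joined by a finite
sequence of points of `V` with consecutive points at distance at most `κ`. -/
def ConnectedWithin (κ : ℝ) (V : Set E) : Prop :=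
  ∀ x ∈ V, ∀ y ∈ V, ∃ (k : ℕ) (f : ℕ → E), f 0 = x ∧ f k = y ∧
    (∀ i ≤ k, f i ∈ V) ∧ ∀ i < k, dist (f i) (f (i + 1)) ≤ κ

/-- `A` contains a `κ`-connected set of `14` sites. -/
def HasConn14 (κ : ℝ) (A : Set E) : Prop :=
  ∃ V ⊆ A, ConnectedWithin κ V ∧ V.ncard = 14

/-- Projection of a set of lattice points of the plane to the torus `(ℤ/nℤ)²`. -/
def torSet (n : ℕ) (S : Set E) : Set (ZMod n × ZMod n) :=
  {p | ∃ a b : ℤ, pt a b ∈ S ∧ p = ((a : ZMod n), (b : ZMod n))}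

/-- One step of bootstrap percolation on the torus `(ℤ/nℤ)²`. -/
def stepT (n : ℕ) (𝒦 : Set E) (r : ℕ) (A : Set (ZMod n × ZMod n)) : Set (ZMod n × ZMod n) :=
  A ∪ {x | r ≤ (((fun k => x + k) '' torSet n 𝒦) ∩ A).ncard}

/-- The bootstrap percolation closure on the torus `(ℤ/nℤ)²`. -/
def bpClT (n : ℕ) (𝒦 : Set E) (r : ℕ) (A : Set (ZMod n × ZMod n)) : Set (ZMod n × ZMod n) :=
  ⋃ t : ℕ, (stepT n 𝒦 r)^[t] A

/-- The set `A(t)` of the first `t` sites of the torus in the order given by `σ`. -/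
def Aset (n : ℕ) (σ : (ZMod n × ZMod n) ≃ Fin (n ^ 2)) (t : ℕ) : Set (ZMod n × ZMod n) :=
  {x | (σ x : ℕ) + 1 ≤ t}

/-- The percolation time `τ`. -/
def percTime (n : ℕ) (𝒦 : Set E) (r : ℕ) (σ : (ZMod n × ZMod n) ≃ Fin (n ^ 2)) : ℕ :=
  sInf {t : ℕ | bpClT n 𝒦 r (Aset n σ t) = univ}

/-- The probability (over a uniformly random bijection `σ : 𝕋 → {1,…,n²}`) that
`|[A(τ-1)]| ≥ τ (1 + C / log n)`. -/
def probBad (𝒦 : Set E) (r : ℕ) (C : ℝ) (n : ℕ) : ℝ :=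
  ({σ : (ZMod n × ZMod n) ≃ Fin (n ^ 2) |
      (percTime n 𝒦 r σ : ℝ) * (1 + C / Real.log n) ≤
        ((bpClT n 𝒦 r (Aset n σ (percTime n 𝒦 r σ - 1))).ncard : ℝ)}.ncard : ℝ) /
    (Nat.card ((ZMod n × ZMod n) ≃ Fin (n ^ 2)) : ℝ)

/-- The rectangle with corner `x`, side of length `len` in direction `rot u`
(perpendicular to `u`) and side of length `wid` in direction `u`. -/
def rectDir (x u : E) (len wid : ℝ) : Set E :=
  {y : E | ∃ a b : ℝ, a ∈ Icc (0 : ℝ) len ∧ b ∈ Icc (0 : ℝ) wid ∧ y = x + a • rot u + b • u}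

/-- The axis-parallel square `[a, a+c] × [b, b+c]`. -/
def axSquare (a b c : ℝ) : Set E := {x : E | x 0 ∈ Icc a (a + c) ∧ x 1 ∈ Icc b (b + c)}

/-- Droplets for the family `S` of stable directions: `D = ℤ² ∩ ⋂_{u ∈ S} {⟨·,u⟩ ≤ l_u}`. -/
def IsDropletS (S : Set E) (D : Set E) : Prop :=
  ∃ l : E → ℝ, D = latt ∩ ⋂ u ∈ S, {x : E | (inner ℝ x u : ℝ) ≤ l u}

/-- The stable directions `𝒮_□` of the two-neighbour model. -/
def Ssq : Set E := {pt 1 0, pt (-1) 0, pt 0 1, pt 0 (-1)}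

/-- The stable directions `𝒮_△` of the triangular three-neighbour model. -/
def Stri : Set E :=
  Ssq ∪ {pt ((Real.sqrt 2)⁻¹) ((Real.sqrt 2)⁻¹), pt (-(Real.sqrt 2)⁻¹) (-(Real.sqrt 2)⁻¹)}

/-- A valid choice of infection sets `𝒦_v ⊆ A_t ∩ (𝒦 + v)` of size `r`, one for each
newly infected vertex `v`. -/
def IsInfChoice (𝒦 : Set E) (r : ℕ) (A : Set E) (κ : E → Set E) : Prop :=
  ∀ t : ℕ, ∀ v ∈ (step 𝒦 r)^[t + 1] (A ∩ latt) \ (step 𝒦 r)^[t] (A ∩ latt),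
    κ v ⊆ (step 𝒦 r)^[t] (A ∩ latt) ∩ ((fun k => v + k) '' 𝒦) ∧ (κ v).ncard = r

/-- The out-degree of `u` in the infection graph determined by the choice `κ`. -/
def outDeg (𝒦 : Set E) (r : ℕ) (A : Set E) (κ : E → Set E) (u : E) : ℕ :=
  {v : E | (∃ t : ℕ, v ∈ (step 𝒦 r)^[t + 1] (A ∩ latt) \ (step 𝒦 r)^[t] (A ∩ latt)) ∧
    u ∈ κ v}.ncard

/-- A vertex of `[A]` is good if its out-degree in the infection graph is at least `0.9 r`. -/
def IsGood (𝒦 : Set E) (r : ℕ) (A : Set E) (κ : E → Set E) (u : E) : Prop :=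
  u ∈ bpCl 𝒦 r A ∧ (0.9 : ℝ) * r ≤ (outDeg 𝒦 r A κ u : ℝ)

/-- A fat convex set: bounded, convex, and all vertical and horizontal chords have
length at least `c`. -/
def IsFat (c : ℝ) (P : Set E) : Prop :=
  Convex ℝ P ∧ Bornology.IsBounded P ∧
  (∀ a : ℝ, (P ∩ {p : E | p 0 = a}).Nonempty → c ≤ Metric.diam (P ∩ {p : E | p 0 = a})) ∧
  (∀ b : ℝ, (P ∩ {p : E | p 1 = b}).Nonempty → c ≤ Metric.diam (P ∩ {p : E | p 1 = b}))

def xmin (P : Set E) : ℝ := sInf ((fun p : E => p 0) '' P)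
def xmax (P : Set E) : ℝ := sSup ((fun p : E => p 0) '' P)
def ymin (P : Set E) : ℝ := sInf ((fun p : E => p 1) '' P)
def ymax (P : Set E) : ℝ := sSup ((fun p : E => p 1) '' P)

/-- A convex set is horizontal if its horizontal extent is at least its vertical extent. -/
def IsHorizontal (P : Set E) : Prop := ymax P - ymin P ≤ xmax P - xmin P

/-- The upper boundary function of `P`. -/
def upperF (P : Set E) (a : ℝ) : ℝ := sSup {y : ℝ | pt a y ∈ P}

/-- The lower boundary function of `P`. -/
def lowerF (P : Set E) (a : ℝ) : ℝ := sInf {y : ℝ | pt a y ∈ P}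

/-- Slopes of tangent (supporting) lines to the upper boundary of `P` at abscissa `a`. -/
def upperSlopes (P : Set E) (a : ℝ) : Set ℝ :=
  {m : ℝ | ∀ t : ℝ, {y : ℝ | pt t y ∈ P}.Nonempty → upperF P t ≤ upperF P a + m * (t - a)}

/-- Slopes of tangent (supporting) lines to the lower boundary of `P` at abscissa `a`. -/
def lowerSlopes (P : Set E) (a : ℝ) : Set ℝ :=
  {m : ℝ | ∀ t : ℝ, {y : ℝ | pt t y ∈ P}.Nonempty → lowerF P a + m * (t - a) ≤ lowerF P t}

/-- The vertical chord `P_{1,a}` is admissible: the tangent angles at the chord are in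
`[-4π/9, 4π/9]` and the tangent slopes barely change at horizontal distance `C₄ s`. -/
def IsAdmissible (C₃ C₄ s : ℝ) (P : Set E) (a : ℝ) : Prop :=
  xmin P + C₄ * s < a ∧ a < xmax P - C₄ * s ∧ (∃ y : ℝ, pt a y ∈ P) ∧
  (∀ m ∈ upperSlopes P a, |Real.arctan m| ≤ 4 * Real.pi / 9) ∧
  (∀ m ∈ lowerSlopes P a, |Real.arctan m| ≤ 4 * Real.pi / 9) ∧
  (∀ m₁ ∈ upperSlopes P (a - C₄ * s), ∀ m₂ ∈ upperSlopes P (a + C₄ * s),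
    Real.arctan m₁ - Real.arctan m₂ ≤ 1 / C₃) ∧
  (∀ m₁ ∈ lowerSlopes P (a - C₄ * s), ∀ m₂ ∈ lowerSlopes P (a + C₄ * s),
    Real.arctan m₂ - Real.arctan m₁ ≤ 1 / C₃)

/-- The set `𝒬` of quasi-stable directions. -/
def quasiStable (s : ℝ) : Set E :=
  {u : E | ‖u‖ = 1 ∧ ∃ a b : ℤ, |(a : ℝ)| ≤ s ∧ |(b : ℝ)| ≤ s ∧ pt a b ≠ 0 ∧
    ∃ c : ℝ, pt a b = c • u}

/-- The (possibly improper) half-plane `{⟨·,u⟩ ≤ l}` for `l ∈ ℝ ∪ {±∞}`. -/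
def ehs (u : E) (l : EReal) : Set E := {x : E | (((inner ℝ x u : ℝ) : ℝ) : EReal) ≤ l}

/-- The droplet with radii `l : E → EReal` (indexed by the quasi-stable directions). -/
def dropletOf (s : ℝ) (l : E → EReal) : Set E := ⋂ u ∈ quasiStable s, ehs u (l u)

/-- `D` is a droplet for the quasi-stable directions. -/
def IsDropletQ (s : ℝ) (D : Set E) : Prop := ∃ l : E → EReal, D = dropletOf s l

/-- The tight radius of `D` in direction `u`. -/
def tight (D : Set E) (u : E) : EReal := sSup ((fun x : E => (((inner ℝ x u : ℝ) : ℝ) : EReal)) '' D)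

/-- The `u`-side of a droplet `D`. -/
def uside (u : E) (D : Set E) : Set E := {x ∈ D | ∀ y ∈ D, (inner ℝ y u : ℝ) ≤ (inner ℝ x u : ℝ)}

/-- A non-degenerate droplet: each `u`-side has length at least `C^{1/3}` for unstable
`u ∈ 𝒬` and at least `C^{1/2}` for stable `u ∈ 𝒬`. -/
def IsNondeg (s C : ℝ) (𝒦 : Set E) (r : ℕ) (D : Set E) : Prop :=
  IsDropletQ s D ∧ ∀ u ∈ quasiStable s,
    (u ∉ stableDirs 𝒦 r → C ^ ((1 : ℝ) / 3) ≤ Metric.diam (uside u D)) ∧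
    (u ∈ stableDirs 𝒦 r → C ^ ((1 : ℝ) / 2) ≤ Metric.diam (uside u D))

/-- The droplet obtained from `D` by replacing its tight radius in direction `v` by `m`. -/
def extDroplet (s : ℝ) (v : E) (D : Set E) (m : EReal) : Set E :=
  (⋂ u ∈ quasiStable s \ {v}, ehs u (tight D u)) ∩ ehs v m

/-- `D'` is the `v`-extension of the droplet `D`. -/
def IsExtension (s : ℝ) (v : E) (D D' : Set E) : Prop :=
  ∃ l' : EReal, tight D v < l' ∧ D' = extDroplet s v D l' ∧
    ((D' \ D) ∩ latt).Nonempty ∧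
    ∀ m : EReal, tight D v < m → ((extDroplet s v D m \ D) ∩ latt).Nonempty → l' ≤ m

/-- Rotation of the plane by the angle `θ`. -/
def rotA (θ : ℝ) (u : E) : E :=
  pt (Real.cos θ * u 0 - Real.sin θ * u 1) (Real.sin θ * u 0 + Real.cos θ * u 1)

/-- The closed half-plane `H̄_u(l)`. -/
def hs (u : E) (l : ℝ) : Set E := {x : E | (inner ℝ x u : ℝ) ≤ l}

/-- The open half-plane `ℍ_u(l)`. -/
def hso (u : E) (l : ℝ) : Set E := {x : E | (inner ℝ x u : ℝ) < l}

/-- Translate of a set. -/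
def transl (x : E) (S : Set E) : Set E := (fun y => x + y) '' S

/-- The rectangle `x + (H̄_u ∩ H̄_{u+π/2} ∩ H̄_{u+π}(wid) ∩ H̄_{u-π/2}(len))`. -/
def rectHS (x u : E) (wid len : ℝ) : Set E :=
  transl x (hs u 0 ∩ hs (rotA (Real.pi / 2) u) 0 ∩ hs (rotA Real.pi u) wid ∩
    hs (rotA (-(Real.pi / 2)) u) len)

end

/-!
Let `y` be a new site of the `v`-extension `D'` of `D` and `k ∈ 𝒦` with `⟨k, v⟩ < 0`. Then
`y + k ∈ D`: it cannot pass the `v`-side by minimality of the extension, nor the `(-v)`-side since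
`D` is wide in direction `v`. If it passed another side `u`, every point of the side of `D` normal
to `⟨k, u⟩ v - ⟨k, v⟩ u` (a quasi-stable direction, being orthogonal to `k`) would lie within `s`
of `y` in both directions `u` and `v`, so this side would have length `O(s³)`, not `≥ C^{1/3}`.

Hence each new site has the `|{k ∈ 𝒦 : ⟨k, v⟩ < 0}|` neighbours `y + k` already in `D`. For
unstable `v` this is at least `r`. For stable `v` it is at least `r - 1`; moreover `𝒦` then contains
a nonzero vector orthogonal to `v`, hence (being convex and symmetric) the primitive lattice vector
`p` of that line. The new sites form a row `z₀ + ℤ p` inside the convex set `D'`, and the infection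
runs along it from the site `z₀` next to `x`, each site getting its `r`-th infected neighbour from
its predecessor.
-/

namespace Plane

@[simp] lemma pt_apply_zero (a b : ℝ) : pt a b 0 = a := rfl
@[simp] lemma pt_apply_one (a b : ℝ) : pt a b 1 = b := rfl
@[simp] lemma rot_apply_zero (x : E) : rot x 0 = -x 1 := rfl
@[simp] lemma rot_apply_one (x : E) : rot x 1 = x 0 := rfl

lemma ext_coord {x y : E} (h0 : x 0 = y 0) (h1 : x 1 = y 1) : x = y := by
  ext i; fin_cases i
  exacts [h0, h1]

lemma inner_eq (x y : E) : ⟪x, y⟫ = x 0 * y 0 + x 1 * y 1 := by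
  simp [PiLp.inner_apply, Fin.sum_univ_two, mul_comm]

lemma norm_sq_eq (x : E) : ‖x‖ ^ 2 = x 0 ^ 2 + x 1 ^ 2 := by
  rw [← real_inner_self_eq_norm_sq, inner_eq]; ring

lemma abs_apply_le_norm (x : E) (i : Fin 2) : |x i| ≤ ‖x‖ := PiLp.norm_apply_le x i

lemma abs_inner_le_of_norm_le {k w : E} {a : ℝ} (hk : ‖k‖ ≤ a) (hw : ‖w‖ = 1) :
    |⟪k, w⟫| ≤ a :=
  (abs_real_inner_le_norm k w).trans (by rw [hw, mul_one]; exact hk)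

lemma rot_smul (c : ℝ) (x : E) : rot (c • x) = c • rot x := by
  apply ext_coord <;> simp

lemma rot_rot (x : E) : rot (rot x) = -x := by
  apply ext_coord <;> simp

lemma norm_rot (x : E) : ‖rot x‖ = ‖x‖ := by
  rw [← sq_eq_sq₀ (norm_nonneg _) (norm_nonneg _), norm_sq_eq, norm_sq_eq]; simp; ring

lemma inner_rot_self (x : E) : ⟪rot x, x⟫ = 0 := by
  rw [inner_eq]; simp; ring

lemma norm_sq_smul_eq (k x : E) :
    ‖k‖ ^ 2 • x = ⟪x, k⟫ • k + ⟪x, rot k⟫ • rot k := by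
  apply ext_coord <;> simp [norm_sq_eq, inner_eq] <;> ring

lemma eq_inner_smul_add_inner_rot_smul {w : E} (hw : ‖w‖ = 1) (x : E) :
    x = ⟪x, w⟫ • w + ⟪x, rot w⟫ • rot w := by
  simpa [hw] using norm_sq_smul_eq w x

lemma norm_le_abs_inner_add_abs_inner_rot {w : E} (hw : ‖w‖ = 1) (x : E) :
    ‖x‖ ≤ |⟪x, w⟫| + |⟪x, rot w⟫| := by
  conv_lhs => rw [eq_inner_smul_add_inner_rot_smul hw x]
  refine (norm_add_le _ _).trans_eq ?_
  rw [norm_smul, norm_smul, norm_rot, hw, Real.norm_eq_abs, Real.norm_eq_abs, mul_one, mul_one]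

lemma eq_or_eq_neg_of_inner_rot_eq_zero {u v : E} (hu : ‖u‖ = 1) (hv : ‖v‖ = 1)
    (h : ⟪rot v, u⟫ = 0) : u = v ∨ u = -v := by
  have hu' := eq_inner_smul_add_inner_rot_smul hv u
  rw [real_inner_comm (rot v) u, h, zero_smul, add_zero] at hu'
  have hc := congrArg norm hu'
  rw [norm_smul, hu, hv, mul_one, Real.norm_eq_abs] at hc
  rcases abs_eq (zero_le_one' ℝ) |>.1 hc.symm with hc | hc <;> rw [hc] at hu'
  · exact .inl (by simpa using hu')
  · exact .inr (by simpa using hu')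

lemma pt_mem_latt (a b : ℤ) : pt a b ∈ latt := ⟨a, b, rfl⟩

lemma latt_add {x y : E} (hx : x ∈ latt) (hy : y ∈ latt) : x + y ∈ latt := by
  obtain ⟨a, b, rfl⟩ := hx; obtain ⟨c, d, rfl⟩ := hy
  exact ⟨a + c, b + d, by apply ext_coord <;> simp⟩

lemma latt_neg {x : E} (hx : x ∈ latt) : -x ∈ latt := by
  obtain ⟨a, b, rfl⟩ := hx
  exact ⟨-a, -b, by apply ext_coord <;> simp⟩

lemma latt_sub {x y : E} (hx : x ∈ latt) (hy : y ∈ latt) : x - y ∈ latt := by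
  simpa [sub_eq_add_neg] using latt_add hx (latt_neg hy)

lemma latt_zsmul (m : ℤ) {x : E} (hx : x ∈ latt) : (m : ℝ) • x ∈ latt := by
  obtain ⟨a, b, rfl⟩ := hx
  exact ⟨m * a, m * b, by apply ext_coord <;> simp⟩

lemma latt_rot {x : E} (hx : x ∈ latt) : rot x ∈ latt := by
  obtain ⟨a, b, rfl⟩ := hx
  exact ⟨-b, a, by apply ext_coord <;> simp⟩

lemma one_le_abs_inner_latt {x y : E} (hx : x ∈ latt) (hy : y ∈ latt) (h : ⟪x, y⟫ ≠ 0) :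
    1 ≤ |⟪x, y⟫| := by
  obtain ⟨a, b, rfl⟩ := hx; obtain ⟨c, d, rfl⟩ := hy
  have hn : ⟪pt a b, pt c d⟫ = ((a * c + b * d : ℤ) : ℝ) := by simp [inner_eq]
  rw [hn] at h ⊢
  exact_mod_cast Int.one_le_abs (by exact_mod_cast h)

end Plane

namespace NiceK

variable {K : Set E}

lemma norm_le (hK : NiceK K) {x : E} (hx : x ∈ K) : ‖x‖ ≤ 1 := hK.normMax.2 ⟨x, hx, rfl⟩

lemma neg_mem (hK : NiceK K) {x : E} (hx : x ∈ K) : -x ∈ K := by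
  simpa [Plane.rot_rot] using hK.rotInv _ (hK.rotInv x hx)

lemma zero_mem (hK : NiceK K) : (0 : E) ∈ K := by
  obtain ⟨k, hk, -⟩ := hK.normMax.1
  simpa using hK.convex hk (hK.neg_mem hk) (by norm_num : (0 : ℝ) ≤ 1 / 2)
    (by norm_num : (0 : ℝ) ≤ 1 / 2) (by norm_num)

lemma smul_mem (hK : NiceK K) {x : E} (hx : x ∈ K) {t : ℝ} (ht : |t| ≤ 1) : t • x ∈ K := by
  rcases le_or_gt 0 t with h | h
  · exact hK.convex.smul_mem_of_zero_mem hK.zero_mem hx ⟨h, (le_abs_self t).trans ht⟩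
  · have := hK.convex.smul_mem_of_zero_mem hK.zero_mem (hK.neg_mem hx) ⟨abs_nonneg t, ht⟩
    rwa [abs_of_neg h, neg_smul_neg] at this

/-- `K` contains the square with diagonals `±k, ±rot k` for a unit vector `k ∈ K`, hence this
ball. -/
lemma mem_of_norm_le_half (hK : NiceK K) {w : E} (hw : ‖w‖ ≤ 1 / 2) : w ∈ K := by
  obtain ⟨k, hk, hk1 : ‖k‖ = 1⟩ := hK.normMax.1
  have hcoef : ∀ x : E, ‖x‖ = 1 → |2 * ⟪w, x⟫| ≤ 1 := fun x hx => by
    rw [abs_mul, abs_two]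
    nlinarith [abs_real_inner_le_norm w x]
  have hrk : ‖rot k‖ = 1 := by rw [Plane.norm_rot, hk1]
  have h := hK.convex (hK.smul_mem hk (hcoef k hk1)) (hK.smul_mem (hK.rotInv k hk) (hcoef _ hrk))
    (by norm_num : (0 : ℝ) ≤ 1 / 2) (by norm_num : (0 : ℝ) ≤ 1 / 2) (by norm_num)
  rwa [smul_smul, smul_smul, ← mul_assoc, ← mul_assoc, one_div_mul_cancel two_ne_zero,
    one_mul, one_mul, ← Plane.eq_inner_smul_add_inner_rot_smul hk1] at h

end NiceK

section Neighbourhood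

variable {K : Set E} {s : ℝ}

lemma norm_le_of_mem_Ks (hK : NiceK K) {k : E} (hk : k ∈ Ks K s) : ‖k‖ ≤ |s| := by
  obtain ⟨x, hx, rfl⟩ := Set.mem_smul_set.1 hk.1
  rw [norm_smul, Real.norm_eq_abs]
  exact mul_le_of_le_one_right (abs_nonneg s) (hK.norm_le hx)

lemma neg_mem_Ks (hK : NiceK K) {k : E} (hk : k ∈ Ks K s) : -k ∈ Ks K s := by
  obtain ⟨x, hx, rfl⟩ := Set.mem_smul_set.1 hk.1
  exact ⟨Set.mem_smul_set.2 ⟨-x, hK.neg_mem hx, smul_neg s x⟩, Plane.latt_neg hk.2⟩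

lemma mem_Ks_of_zsmul_mem (hK : NiceK K) {p : E} (hp : p ∈ latt) {m : ℤ} (hm : m ≠ 0)
    (h : (m : ℝ) • p ∈ Ks K s) : p ∈ Ks K s := by
  obtain ⟨x, hx, hxp⟩ := Set.mem_smul_set.1 h.1
  have hm' : (m : ℝ) ≠ 0 := by exact_mod_cast hm
  refine ⟨Set.mem_smul_set.2 ⟨(m : ℝ)⁻¹ • x, hK.smul_mem hx ?_, ?_⟩, hp⟩
  · rw [abs_inv]
    exact inv_le_one_of_one_le₀ (by exact_mod_cast Int.one_le_abs hm)
  · rw [smul_comm, hxp, inv_smul_smul₀ hm']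

lemma pt_apply_zero_one_mem_Ks (hK : NiceK K) (hs : 2 ≤ s) : pt 0 1 ∈ Ks K s := by
  have hs0 : 0 < s := by linarith
  refine ⟨Set.mem_smul_set.2 ⟨s⁻¹ • pt 0 1, hK.mem_of_norm_le_half ?_, smul_inv_smul₀ hs0.ne' _⟩,
    ⟨0, 1, by simp⟩⟩
  have h1 : ‖pt 0 1‖ = 1 := by
    rw [← sq_eq_sq₀ (norm_nonneg _) zero_le_one, Plane.norm_sq_eq]; simp
  rw [norm_smul, h1, mul_one, Real.norm_eq_abs, abs_inv, abs_of_pos hs0]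
  exact inv_anti₀ two_pos hs |>.trans_eq (one_div 2).symm

lemma Ks_finite (hK : NiceK K) : (Ks K s).Finite := by
  set N := ⌈|s|⌉
  refine ((Set.finite_Icc (-N, -N) (N, N)).image fun p : ℤ × ℤ => pt p.1 p.2).subset ?_
  rintro k hk
  obtain ⟨a, b, rfl⟩ := hk.2
  have hcoord : ∀ (c : ℤ) (i : Fin 2), (c : ℝ) = pt a b i → -N ≤ c ∧ c ≤ N := fun c i hc => by
    have h : ((|c| : ℤ) : ℝ) ≤ N := by
      rw [Int.cast_abs, hc]
      exact (Plane.abs_apply_le_norm _ i).trans ((norm_le_of_mem_Ks hK hk).trans (Int.le_ceil _))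
    exact abs_le.1 (by exact_mod_cast h)
  exact ⟨(a, b), ⟨⟨(hcoord a 0 rfl).1, (hcoord b 1 rfl).1⟩, ⟨(hcoord a 0 rfl).2,
    (hcoord b 1 rfl).2⟩⟩, rfl⟩

end Neighbourhood

section Counting

variable {F : Type*} [NormedAddCommGroup F] [InnerProductSpace ℝ F]

def negHalf (S : Set F) (u : F) : Set F := {x | x ∈ S ∧ ⟪x, u⟫ < 0}

lemma ncard_eq_two_mul_ncard_negHalf_add {S : Set F} (hS : S.Finite)
    (hneg : ∀ x ∈ S, -x ∈ S) (u : F) :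
    S.ncard = 2 * (negHalf S u).ncard + {x | x ∈ S ∧ ⟪x, u⟫ = 0}.ncard := by
  have hpos : {x | x ∈ S ∧ 0 < ⟪x, u⟫} = (fun x => -x) '' negHalf S u := by
    ext x
    refine ⟨fun hx => ⟨-x, ⟨hneg x hx.1, by simpa [inner_neg_left] using hx.2⟩, neg_neg x⟩, ?_⟩
    rintro ⟨x, hx, rfl⟩
    exact ⟨hneg x hx.1, by simpa [inner_neg_left] using hx.2⟩
  rw [← Set.ncard_inter_add_ncard_sdiff_eq_ncard S {x | ⟪x, u⟫ < 0} hS,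
    ← Set.ncard_inter_add_ncard_sdiff_eq_ncard (S \ {x | ⟪x, u⟫ < 0}) {x | ⟪x, u⟫ = 0}
      hS.sdiff]
  have hzero : (S \ {x | ⟪x, u⟫ < 0}) ∩ {x | ⟪x, u⟫ = 0} = {x | x ∈ S ∧ ⟪x, u⟫ = 0} := by
    ext x; simp only [Set.mem_inter_iff, Set.mem_sdiff, Set.mem_ofPred_eq]
    exact ⟨fun h => ⟨h.1.1, h.2⟩, fun h => ⟨⟨h.1, h.2.not_lt⟩, h.2⟩⟩
  have hdiff : (S \ {x | ⟪x, u⟫ < 0}) \ {x | ⟪x, u⟫ = 0} = {x | x ∈ S ∧ 0 < ⟪x, u⟫} := by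
    ext x; simp only [Set.mem_sdiff, Set.mem_ofPred_eq, not_lt]
    exact ⟨fun h => ⟨h.1.1, lt_of_le_of_ne h.1.2 (Ne.symm h.2)⟩, fun h => ⟨⟨h.1, h.2.le⟩, h.2.ne'⟩⟩
  rw [hzero, hdiff, hpos, Set.ncard_image_of_injective _ neg_injective]
  change (negHalf S u).ncard + _ = _
  ring

end Counting

section Threshold

open Plane

variable {K : Set E} {s : ℝ} {v : E}

lemma rKs_le_ncard_negHalf_add_one (hv : v ≠ 0) : rKs K s ≤ (negHalf (Ks K s) v).ncard + 1 := by
  have := Nat.sInf_le (Set.mem_image_of_mem (fun u : E => (negHalf (Ks K s) u).ncard)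
    (show v ∈ {u : E | u ≠ 0} from hv))
  change 1 + sInf ((fun u : E => (negHalf (Ks K s) u).ncard) '' {u : E | u ≠ 0}) ≤ _
  omega

/-- As `|𝒦| = 2 |negHalf 𝒦 u| + |𝒦 ∩ u^⊥|` and a stable `v` minimises `|negHalf 𝒦 v|`, the line
`v^⊥` carries at least as many sites as the line through `± pt 0 1`. -/
lemma exists_inner_eq_zero_of_mem_stableDirs (hK : NiceK K) (hs : 2 ≤ s)
    (hv : v ∈ stableDirs (Ks K s) (rKs K s)) : ∃ q ∈ Ks K s, q ≠ 0 ∧ ⟪q, v⟫ = 0 := by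
  by_contra! h
  have hfin := Ks_finite hK (s := s)
  have hsymm : ∀ x ∈ Ks K s, -x ∈ Ks K s := fun x hx => neg_mem_Ks hK hx
  have he := pt_apply_zero_one_mem_Ks hK hs
  have he0 : pt 0 1 ≠ 0 := fun h0 => by simpa using congrArg (· 1) h0
  have hZv : {x | x ∈ Ks K s ∧ ⟪x, v⟫ = 0}.ncard ≤ 1 :=
    (Set.ncard_le_ncard (t := {0}) (fun x hx => by_contra fun hx0 => h x hx.1 hx0 hx.2)).trans
      (Set.ncard_singleton _).le
  have hZe : 2 ≤ {x | x ∈ Ks K s ∧ ⟪x, rot (pt 0 1)⟫ = 0}.ncard := by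
    have hsub : {pt 0 1, -pt 0 1} ⊆ {x | x ∈ Ks K s ∧ ⟪x, rot (pt 0 1)⟫ = 0} := by
      rintro x (rfl | rfl)
      · exact ⟨he, by rw [real_inner_comm, inner_rot_self]⟩
      · exact ⟨hsymm _ he, by rw [inner_neg_left, real_inner_comm, inner_rot_self, neg_zero]⟩
    have hne : pt 0 1 ≠ -pt 0 1 := fun h1 => by
      have := congrArg (· 1) h1; norm_num at this
    exact (Set.ncard_pair hne).symm.le.trans
      (Set.ncard_le_ncard hsub (hfin.subset fun x hx => hx.1))
  have hsplit_v := ncard_eq_two_mul_ncard_negHalf_add hfin hsymm v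
  have hsplit_e := ncard_eq_two_mul_ncard_negHalf_add hfin hsymm (rot (pt 0 1))
  have hr := rKs_le_ncard_negHalf_add_one (K := K) (s := s) (v := rot (pt 0 1))
    (fun h0 => he0 (by rw [← norm_eq_zero, ← norm_rot, h0, norm_zero]))
  have hstable : (negHalf (Ks K s) v).ncard < rKs K s := hv.2
  omega

end Threshold

section QuasiStable

open Plane

variable {s : ℝ}

lemma exists_latt_eq_norm_smul_of_mem_quasiStable {u : E} (hu : u ∈ quasiStable s) :
    ∃ p ∈ latt, p ≠ 0 ∧ ‖p‖ ≤ 2 * s ∧ p = ‖p‖ • u := by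
  obtain ⟨hu1, a, b, ha, hb, hab, c, hc⟩ := hu
  have hnorm : ‖pt a b‖ = |c| := by rw [hc, norm_smul, hu1, mul_one, Real.norm_eq_abs]
  have hle : ‖pt a b‖ ≤ 2 * s := by
    have h := norm_sq_eq (pt a b)
    simp only [pt_apply_zero, pt_apply_one] at h
    nlinarith [sq_abs (a : ℝ), sq_abs (b : ℝ), abs_nonneg (a : ℝ), abs_nonneg (b : ℝ),
      norm_nonneg (pt a b)]
  rcases le_or_gt 0 c with h | h
  · exact ⟨pt a b, pt_mem_latt a b, hab, hle, by rw [hnorm, abs_of_nonneg h, hc]⟩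
  · refine ⟨-pt a b, latt_neg (pt_mem_latt a b), neg_ne_zero.2 hab, by rwa [norm_neg], ?_⟩
    rw [norm_neg, hnorm, abs_of_neg h, hc, neg_smul]

lemma rot_mem_quasiStable {u : E} (hu : u ∈ quasiStable s) : rot u ∈ quasiStable s := by
  obtain ⟨hu1, a, b, ha, hb, hab, c, hc⟩ := hu
  have hrot : pt ((-b : ℤ) : ℝ) (a : ℝ) = rot (pt a b) := by apply ext_coord <;> simp
  refine ⟨by rw [norm_rot, hu1], -b, a, by simpa using hb, ha, ?_, c, ?_⟩
  · rw [hrot, ← norm_ne_zero_iff, norm_rot, norm_ne_zero_iff]; exact hab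
  · rw [hrot, hc, rot_smul]

lemma one_le_mul_abs_inner_of_mem_quasiStable {u k : E} (hu : u ∈ quasiStable s)
    (hk : k ∈ latt) (h : ⟪k, u⟫ ≠ 0) : 1 ≤ 2 * s * |⟪k, u⟫| := by
  obtain ⟨p, hp, hp0, hps, hpu⟩ := exists_latt_eq_norm_smul_of_mem_quasiStable hu
  have hkp : ⟪k, p⟫ = ‖p‖ * ⟪k, u⟫ := by rw [hpu, real_inner_smul_right, ← hpu]
  have h1 := one_le_abs_inner_latt hk hp (by rw [hkp]; exact mul_ne_zero (norm_ne_zero_iff.2 hp0) h)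
  rw [hkp, abs_mul, abs_norm] at h1
  nlinarith [abs_nonneg ⟪k, u⟫]

lemma one_le_mul_abs_inner_rot {u v : E} (hu : u ∈ quasiStable s) (hv : v ∈ quasiStable s)
    (huv : u ≠ v) (huv' : u ≠ -v) : 1 ≤ 4 * s ^ 2 * |⟪rot v, u⟫| := by
  have h0 : ⟪rot v, u⟫ ≠ 0 := fun h =>
    (eq_or_eq_neg_of_inner_rot_eq_zero hu.1 hv.1 h).elim huv huv'
  obtain ⟨p, hp, hp0, hps, hpv⟩ := exists_latt_eq_norm_smul_of_mem_quasiStable hv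
  have hrp : ⟪rot p, u⟫ = ‖p‖ * ⟪rot v, u⟫ := by
    rw [hpv, rot_smul, real_inner_smul_left, ← hpv]
  have h1 := one_le_mul_abs_inner_of_mem_quasiStable hu (latt_rot hp)
    (by rw [hrp]; exact mul_ne_zero (norm_ne_zero_iff.2 hp0) h0)
  rw [hrp, abs_mul, abs_norm] at h1
  have hs : 0 ≤ 2 * s := (norm_nonneg p).trans hps
  nlinarith [mul_le_mul_of_nonneg_right hps (mul_nonneg hs (abs_nonneg ⟪rot v, u⟫))]

lemma norm_le_of_abs_inner_le {u v : E} (hu : u ∈ quasiStable s) (hv : v ∈ quasiStable s)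
    (huv : u ≠ v) (huv' : u ≠ -v) {d : E} {a : ℝ} (hdv : |⟪d, v⟫| ≤ a) (hdu : |⟪d, u⟫| ≤ a) :
    ‖d‖ ≤ a + 8 * s ^ 2 * a := by
  have hsep := one_le_mul_abs_inner_rot hu hv huv huv'
  have hdu' : ⟪d, u⟫ = ⟪d, v⟫ * ⟪v, u⟫ + ⟪d, rot v⟫ * ⟪rot v, u⟫ := by
    conv_lhs => rw [eq_inner_smul_add_inner_rot_smul hv.1 d]
    rw [inner_add_left, real_inner_smul_left, real_inner_smul_left]
  have hvu : |⟪v, u⟫| ≤ 1 := by simpa [hu.1, hv.1] using abs_real_inner_le_norm v u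
  have hrot : |⟪d, rot v⟫| * |⟪rot v, u⟫| ≤ 2 * a := by
    rw [← abs_mul]
    calc |⟪d, rot v⟫ * ⟪rot v, u⟫| = |⟪d, u⟫ - ⟪d, v⟫ * ⟪v, u⟫| := by rw [hdu']; ring_nf
      _ ≤ |⟪d, u⟫| + |⟪d, v⟫| * |⟪v, u⟫| := by rw [← abs_mul]; exact abs_sub _ _
      _ ≤ 2 * a := by nlinarith [abs_nonneg ⟪d, v⟫, abs_nonneg ⟪v, u⟫]
  have := norm_le_abs_inner_add_abs_inner_rot hv.1 d
  nlinarith [abs_nonneg ⟪d, rot v⟫, abs_nonneg ⟪rot v, u⟫, sq_nonneg s]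

lemma mem_quasiStable_of_inner_eq_zero {k w : E} (hk : k ∈ latt) (hks : ‖k‖ ≤ s) (hk0 : k ≠ 0)
    (hw : ‖w‖ = 1) (hwk : ⟪w, k⟫ = 0) : w ∈ quasiStable s := by
  have hdec := norm_sq_smul_eq k w
  rw [hwk, zero_smul, zero_add] at hdec
  have hk2 : ‖k‖ ^ 2 ≠ 0 := pow_ne_zero 2 (norm_ne_zero_iff.2 hk0)
  have hc : ⟪w, rot k⟫ ≠ 0 := by
    intro hc
    rw [hc, zero_smul, smul_eq_zero] at hdec
    exact hdec.elim hk2 (fun h => by simp [h] at hw)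
  obtain ⟨a, b, rfl⟩ := hk
  have hrot : pt ((-b : ℤ) : ℝ) (a : ℝ) = rot (pt a b) := by apply ext_coord <;> simp
  have hcoord : ∀ i, |rot (pt a b) i| ≤ s := fun i =>
    (abs_apply_le_norm _ i).trans (by rwa [norm_rot])
  refine ⟨hw, -b, a, by simpa using hcoord 0, by simpa using hcoord 1, ?_,
    ‖pt a b‖ ^ 2 / ⟪w, rot (pt a b)⟫, ?_⟩
  · rw [hrot, ← norm_ne_zero_iff, norm_rot, norm_ne_zero_iff]; exact hk0
  · rw [hrot, div_eq_inv_mul, mul_smul, hdec, inv_smul_smul₀ hc]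

/-- `⟪k, u⟫ v - ⟪k, v⟫ u` is orthogonal to `k`, a lattice vector of norm at most `s`, so its
direction is quasi-stable. -/
lemma exists_mem_quasiStable_smul_eq {u v k : E} (hu : u ∈ quasiStable s)
    (hv : v ∈ quasiStable s) (huv : u ≠ v) (huv' : u ≠ -v) (hk : k ∈ latt) (hks : ‖k‖ ≤ s)
    (hkv : ⟪k, v⟫ ≠ 0) :
    ∃ w ∈ quasiStable s, w ≠ v ∧ ∃ c : ℝ, 0 ≤ c ∧ ⟪k, u⟫ • v - ⟪k, v⟫ • u = c • w := by
  set z := ⟪k, u⟫ • v - ⟪k, v⟫ • u with hz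
  have hurv : ⟪u, rot v⟫ ≠ 0 := fun h => (eq_or_eq_neg_of_inner_rot_eq_zero hu.1 hv.1
    (by rwa [real_inner_comm])).elim huv huv'
  have hvrv : ⟪v, rot v⟫ = 0 := by rw [real_inner_comm, inner_rot_self]
  have hzrv : ⟪z, rot v⟫ = -⟪k, v⟫ * ⟪u, rot v⟫ := by
    rw [hz, inner_sub_left, real_inner_smul_left, real_inner_smul_left, hvrv]; ring
  have hz0 : z ≠ 0 := fun h => by simp [h, hkv, hurv] at hzrv
  have hzn : ‖z‖ ≠ 0 := norm_ne_zero_iff.2 hz0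
  have hzk : ⟪‖z‖⁻¹ • z, k⟫ = 0 := by
    rw [real_inner_smul_left, hz, inner_sub_left, real_inner_smul_left, real_inner_smul_left,
      real_inner_comm k v, real_inner_comm k u]
    ring
  refine ⟨‖z‖⁻¹ • z, mem_quasiStable_of_inner_eq_zero hk hks (fun h => by simp [h] at hkv)
    (norm_smul_inv_norm hz0) hzk, fun h => ?_, ‖z‖, norm_nonneg z, (smul_inv_smul₀ hzn z).symm⟩
  have : ⟪z, rot v⟫ = ‖z‖ * ⟪v, rot v⟫ := by
    rw [← h, real_inner_smul_left, mul_inv_cancel_left₀ hzn]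
  rw [hvrv, mul_zero, hzrv] at this
  simp [hkv, hurv] at this

lemma exists_latt_inner_eq_zero_eq_zsmul {v : E} (hv : v ∈ quasiStable s) :
    ∃ p ∈ latt, ⟪p, v⟫ = 0 ∧ ∀ x ∈ latt, ⟪x, v⟫ = 0 → ∃ m : ℤ, x = (m : ℝ) • p := by
  obtain ⟨-, a, b, -, -, hab, c, hc⟩ := hv
  have hc0 : c ≠ 0 := by rintro rfl; exact hab (by rw [hc, zero_smul])
  have hg : 0 < Int.gcd a b := Int.gcd_pos_iff.2 <| by
    by_contra! h
    exact hab (by rw [h.1, h.2]; apply ext_coord <;> simp)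
  obtain ⟨g, a', b', hg0, hg1, rfl, rfl⟩ := Int.exists_gcd_one' hg
  obtain ⟨μ, ν, hμν⟩ := Int.isCoprime_iff_gcd_eq_one.2 hg1
  have hline : ∀ x y : ℤ, ⟪pt x y, v⟫ = 0 ↔ a' * x + b' * y = 0 := fun x y => by
    have hv' : v = c⁻¹ • pt ↑(a' * g) ↑(b' * g) := by rw [hc, inv_smul_smul₀ hc0]
    have hxy : ⟪pt x y, pt ↑(a' * g) ↑(b' * g)⟫ = ((a' * x + b' * y : ℤ) : ℝ) * g := by
      simp only [inner_eq, pt_apply_zero, pt_apply_one]; push_cast; ring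
    rw [hv', real_inner_smul_right, hxy, mul_eq_zero, or_iff_right (inv_ne_zero hc0),
      mul_eq_zero, or_iff_left (by exact_mod_cast hg0.ne'), Int.cast_eq_zero]
  refine ⟨pt b' ((-a' : ℤ) : ℝ), pt_mem_latt _ _, by rw [hline]; ring, ?_⟩
  rintro _ ⟨x, y, rfl⟩ hxy
  have hxy' := (hline x y).1 hxy
  refine ⟨ν * x - μ * y, ext_coord ?_ ?_⟩
  · simp only [pt_apply_zero, PiLp.smul_apply, smul_eq_mul]
    exact_mod_cast (by linear_combination μ * hxy' - x * hμν : x = (ν * x - μ * y) * b')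
  · simp only [pt_apply_one, PiLp.smul_apply, smul_eq_mul]
    exact_mod_cast (by linear_combination ν * hxy' - y * hμν : y = (ν * x - μ * y) * -a')

end QuasiStable

section Droplet

variable {s : ℝ} {D : Set E} {u v x : E}

lemma mem_ehs_tight_of_inner_le {p : E} (hp : p ∈ D) (h : ⟪x, u⟫ ≤ ⟪p, u⟫) :
    x ∈ ehs u (tight D u) :=
  (EReal.coe_le_coe_iff.2 h).trans (le_sSup ⟨p, hp, rfl⟩)

lemma subset_ehs_tight (D : Set E) (u : E) : D ⊆ ehs u (tight D u) :=
  fun _ hp => mem_ehs_tight_of_inner_le hp le_rfl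

lemma mem_ehs_tight_iff {p : E} (hp : p ∈ uside u D) : x ∈ ehs u (tight D u) ↔ ⟪x, u⟫ ≤ ⟪p, u⟫ := by
  have htight : tight D u = ⟪p, u⟫ :=
    le_antisymm (sSup_le (by rintro _ ⟨y, hy, rfl⟩; exact EReal.coe_le_coe_iff.2 (hp.2 y hy)))
      (le_sSup ⟨p, hp.1, rfl⟩)
  rw [ehs, Set.mem_ofPred_eq, htight, EReal.coe_le_coe_iff]

lemma IsDropletQ.mem_iff (hD : IsDropletQ s D) :
    x ∈ D ↔ ∀ u ∈ quasiStable s, x ∈ ehs u (tight D u) := by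
  refine ⟨fun hx u _ => subset_ehs_tight D u hx, fun hx => ?_⟩
  obtain ⟨l, rfl⟩ := hD
  refine Set.mem_iInter₂.2 fun u hu => show (⟪x, u⟫ : EReal) ≤ l u from
    (hx u hu).trans (sSup_le ?_)
  rintro _ ⟨y, hy, rfl⟩
  exact Set.mem_iInter₂.1 hy u hu

lemma IsDropletQ.tight_lt_inner (hD : IsDropletQ s D)
    (hx : ∀ u ∈ quasiStable s, u ≠ v → x ∈ ehs u (tight D u)) (hxD : x ∉ D) :
    tight D v < ⟪x, v⟫ := by
  by_contra h
  exact hxD (hD.mem_iff.2 fun u hu => (eq_or_ne u v).elim (· ▸ not_lt.1 h) (hx u hu))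

lemma IsDropletQ.inner_lt (hD : IsDropletQ s D)
    (hx : ∀ u ∈ quasiStable s, u ≠ v → x ∈ ehs u (tight D u)) (hxD : x ∉ D) {p : E}
    (hp : p ∈ D) : ⟪p, v⟫ < ⟪x, v⟫ :=
  EReal.coe_lt_coe_iff.1 ((subset_ehs_tight D v hp).trans_lt (hD.tight_lt_inner hx hxD))

lemma convex_ehs (u : E) (l : EReal) : Convex ℝ (ehs u l) := by
  have hl : IsLowerSet {t : ℝ | (t : EReal) ≤ l} := fun a b hab h =>
    (EReal.coe_le_coe_iff.2 hab).trans h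
  exact hl.ordConnected.convex.is_linear_preimage (f := fun x : E => ⟪x, u⟫)
    ⟨fun x y => inner_add_left x y u, fun c x => real_inner_smul_left x u c⟩

lemma convex_extDroplet (v : E) (D : Set E) (m : EReal) : Convex ℝ (extDroplet s v D m) :=
  (convex_iInter₂ fun u _ => convex_ehs u _).inter (convex_ehs v m)

end Droplet

section Extension

variable {s : ℝ} {D D' : Set E} {v x z : E}

lemma IsExtension.convex (hExt : IsExtension s v D D') : Convex ℝ D' := by
  obtain ⟨l', -, rfl, -⟩ := hExt
  exact convex_extDroplet v D l'

lemma IsExtension.mem_ehs_tight (hExt : IsExtension s v D D') (hx : x ∈ D') :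
    ∀ u ∈ quasiStable s, u ≠ v → x ∈ ehs u (tight D u) := by
  obtain ⟨l', -, rfl, -⟩ := hExt
  exact fun u hu huv => Set.mem_iInter₂.1 hx.1 u ⟨hu, huv⟩

lemma IsExtension.inner_le (hExt : IsExtension s v D D') (hD : IsDropletQ s D)
    (hz : z ∈ (D' \ D) ∩ latt) (hx : x ∈ latt) (hxD : x ∉ D)
    (hxu : ∀ u ∈ quasiStable s, u ≠ v → x ∈ ehs u (tight D u)) : ⟪z, v⟫ ≤ ⟪x, v⟫ := by
  obtain ⟨l', -, hD', -, hmin⟩ := hExt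
  have hzl : (⟪z, v⟫ : EReal) ≤ l' := by rw [hD'] at hz; exact hz.1.1.2
  have hxl : l' ≤ ⟪x, v⟫ := hmin _ (hD.tight_lt_inner hxu hxD)
    ⟨x, ⟨⟨Set.mem_iInter₂.2 fun u hu => hxu u hu.1 hu.2,
      show (⟪x, v⟫ : EReal) ≤ ⟪x, v⟫ from le_rfl⟩, hxD⟩, hx⟩
  exact EReal.coe_le_coe_iff.1 (hzl.trans hxl)

end Extension

section Nondegenerate

variable {s C : ℝ} {𝒦 : Set E} {r : ℕ} {D D' : Set E} {u v y k : E}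

lemma IsNondeg.exists_uside_pair (hND : IsNondeg s C 𝒦 r D) (hC : 1 ≤ C)
    (hu : u ∈ quasiStable s) :
    ∃ p₁ ∈ uside u D, ∃ p₂ ∈ uside u D, C ^ ((1 : ℝ) / 3) - 1 ≤ dist p₁ p₂ := by
  have hdiam : C ^ ((1 : ℝ) / 3) ≤ Metric.diam (uside u D) := by
    by_cases hst : u ∈ stableDirs 𝒦 r
    · exact (Real.rpow_le_rpow_of_exponent_le hC (by norm_num)).trans ((hND.2 u hu).2 hst)
    · exact (hND.2 u hu).1 hst
  by_contra! h
  have h1 : 1 ≤ C ^ ((1 : ℝ) / 3) := Real.one_le_rpow hC (by norm_num)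
  have := Metric.diam_le_of_forall_dist_le (by linarith) fun x hx y hy => (h x hx y hy).le
  linarith

/-- The side of `D` orthogonal to `rot v` is long, so `D` is wide in the direction `v`. -/
lemma IsNondeg.exists_inner_le (hND : IsNondeg s C 𝒦 r D) (hC : 1 ≤ C)
    (hv : v ∈ quasiStable s) {T : ℝ} (hT : ∀ p ∈ D, ⟪p, v⟫ ≤ T) :
    ∃ p ∈ D, ⟪p, v⟫ ≤ T - (C ^ ((1 : ℝ) / 3) - 1) := by
  obtain ⟨p₁, hp₁, p₂, hp₂, hdist⟩ := hND.exists_uside_pair hC (rot_mem_quasiStable hv)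
  have hrot : ⟪p₁ - p₂, rot v⟫ = 0 := by
    rw [inner_sub_left, le_antisymm (hp₂.2 p₁ hp₁.1) (hp₁.2 p₂ hp₂.1), sub_self]
  have hnorm := Plane.norm_le_abs_inner_add_abs_inner_rot hv.1 (p₁ - p₂)
  rw [hrot, abs_zero, add_zero, inner_sub_left, ← dist_eq_norm] at hnorm
  rcases le_total ⟪p₁, v⟫ ⟪p₂, v⟫ with h | h
  · refine ⟨p₁, hp₁.1, ?_⟩
    rw [abs_of_nonpos (by linarith)] at hnorm
    linarith [hT p₂ hp₂.1]
  · refine ⟨p₂, hp₂.1, ?_⟩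
    rw [abs_of_nonneg (by linarith)] at hnorm
    linarith [hT p₁ hp₁.1]

lemma IsNondeg.add_mem_ehs_tight_neg (hND : IsNondeg s C 𝒦 r D) (hC : 1 ≤ C)
    (hsC : s + 1 ≤ C ^ ((1 : ℝ) / 3)) (hv : v ∈ quasiStable s) (hks : ‖k‖ ≤ s)
    (hyv : ∀ p ∈ D, ⟪p, v⟫ ≤ ⟪y, v⟫) : y + k ∈ ehs (-v) (tight D (-v)) := by
  obtain ⟨p, hp, hpv⟩ := hND.exists_inner_le hC hv hyv
  refine mem_ehs_tight_of_inner_le hp ?_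
  have hkv := Plane.abs_inner_le_of_norm_le hks hv.1
  rw [inner_neg_right, inner_neg_right, inner_add_left]
  linarith [neg_abs_le ⟪k, v⟫]

/-- If `y + k` overshot the `u`-side, the long side of `D` normal to `⟪k, u⟫ v - ⟪k, v⟫ u` would be
confined to a parallelogram of diameter `O(s³)`. -/
lemma IsNondeg.add_mem_ehs_tight (hND : IsNondeg s C 𝒦 r D) (hC : 1 ≤ C) (hs : 2 ≤ s)
    (hL : 10 * s ^ 3 ≤ C ^ ((1 : ℝ) / 3)) (hu : u ∈ quasiStable s) (hv : v ∈ quasiStable s)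
    (huv : u ≠ v) (huv' : u ≠ -v) (hk : k ∈ latt) (hks : ‖k‖ ≤ s) (hkv : ⟪k, v⟫ < 0)
    (hy : ∀ w ∈ quasiStable s, w ≠ v → y ∈ ehs w (tight D w))
    (hyv : ∀ p ∈ D, ⟪p, v⟫ < ⟪y, v⟫) : y + k ∈ ehs u (tight D u) := by
  obtain ⟨q, hq, -⟩ := hND.exists_uside_pair hC hu
  rw [mem_ehs_tight_iff hq]
  by_contra! hover
  have hyu := (mem_ehs_tight_iff hq).1 (hy u hu huv)
  rw [inner_add_left] at hover
  have hku := Plane.abs_inner_le_of_norm_le hks hu.1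
  have hkv' := Plane.abs_inner_le_of_norm_le hks hv.1
  obtain ⟨w, hw, hwv, c, hc, hz⟩ :=
    exists_mem_quasiStable_smul_eq hu hv huv huv' hk hks hkv.ne
  have hbound : ∀ p ∈ uside w D, 0 < ⟪y - p, v⟫ ∧ ⟪y - p, v⟫ < s ∧
      -s < ⟪y - p, u⟫ ∧ ⟪y - p, u⟫ < 0 := by
    intro p hp
    have hyw := (mem_ehs_tight_iff hp).1 (hy w hw hwv)
    have hnormal : ⟪k, u⟫ * ⟪y - p, v⟫ - ⟪k, v⟫ * ⟪y - p, u⟫ ≤ 0 := by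
      have h := congrArg (fun z => ⟪y - p, z⟫) hz
      simp only [inner_sub_right, real_inner_smul_right] at h
      rw [h]
      exact mul_nonpos_of_nonneg_of_nonpos hc (by rw [inner_sub_left]; linarith)
    have hX : 0 < ⟪y - p, v⟫ := by rw [inner_sub_left]; linarith [hyv p hp.1]
    have hY : -⟪k, u⟫ < ⟪y - p, u⟫ := by rw [inner_sub_left]; linarith [hq.2 p hp.1]
    have hα := le_of_abs_le hku
    have hβ := neg_le_of_abs_le hkv'
    refine ⟨hX, ?_, by linarith, ?_⟩ <;> nlinarith
  obtain ⟨p₁, hp₁, p₂, hp₂, hdist⟩ := hND.exists_uside_pair hC hw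
  obtain ⟨hX₁, hX₁', hY₁, hY₁'⟩ := hbound p₁ hp₁
  obtain ⟨hX₂, hX₂', hY₂, hY₂'⟩ := hbound p₂ hp₂
  have hd : ∀ x : E, ⟪p₁ - p₂, x⟫ = ⟪y - p₂, x⟫ - ⟪y - p₁, x⟫ := fun x => by
    simp only [inner_sub_left]; ring
  have hdv : |⟪p₁ - p₂, v⟫| ≤ s := abs_le.2 ⟨by linarith [hd v], by linarith [hd v]⟩
  have hdu : |⟪p₁ - p₂, u⟫| ≤ s := abs_le.2 ⟨by linarith [hd u], by linarith [hd u]⟩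
  have hnorm := norm_le_of_abs_inner_le hu hv huv huv' hdv hdu
  rw [← dist_eq_norm] at hnorm
  nlinarith

lemma IsExtension.add_mem (hExt : IsExtension s v D D') (hND : IsNondeg s C 𝒦 r D)
    (hC : 1 ≤ C) (hs : 2 ≤ s) (hL : 10 * s ^ 3 ≤ C ^ ((1 : ℝ) / 3)) (hv : v ∈ quasiStable s)
    (hy : y ∈ (D' \ D) ∩ latt) (hk : k ∈ latt) (hks : ‖k‖ ≤ s) (hkv : ⟪k, v⟫ < 0) :
    y + k ∈ D := by
  have hyu := hExt.mem_ehs_tight hy.1.1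
  have hyv : ∀ p ∈ D, ⟪p, v⟫ < ⟪y, v⟫ := fun p hp => hND.1.inner_lt hyu hy.1.2 hp
  have hside : ∀ u ∈ quasiStable s, u ≠ v → y + k ∈ ehs u (tight D u) := by
    intro u hu huv
    by_cases huv' : u = -v
    · subst huv'
      have hs3 : s + 1 ≤ 10 * s ^ 3 := by nlinarith [mul_le_mul hs hs (by norm_num) (by linarith)]
      exact hND.add_mem_ehs_tight_neg hC (hs3.trans hL) hv hks fun p hp => (hyv p hp).le
    · exact hND.add_mem_ehs_tight hC hs hL hu hv huv huv' hk hks hkv hyu hyv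
  by_contra hyk
  have := hExt.inner_le hND.1 hy (Plane.latt_add hy.2 hk) hyk hside
  rw [inner_add_left] at this
  linarith

end Nondegenerate

section Percolation

variable {𝒦 : Set E} {r : ℕ} {A B : Set E} {x : E}

lemma subset_iterate_stepIn (n : ℕ) : A ⊆ (stepIn 𝒦 r B)^[n] A := by
  induction n with
  | zero => exact subset_rfl
  | succ n ih => rw [Function.iterate_succ_apply']; exact ih.trans Set.subset_union_left

lemma mem_stepIn_of_subset (h𝒦 : 𝒦.Finite) (hx : x ∈ B ∩ latt) {S : Set E}
    (hS : S ⊆ ((fun k => x + k) '' 𝒦) ∩ A) (hr : r ≤ S.ncard) : x ∈ stepIn 𝒦 r B A :=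
  .inr ⟨hx, hr.trans (Set.ncard_le_ncard hS ((h𝒦.image _).inter_of_left _))⟩

lemma mem_bpClIn_of_mem_iterate {n : ℕ} (h : x ∈ (stepIn 𝒦 r B)^[n] (A ∩ latt)) :
    x ∈ bpClIn 𝒦 r B A :=
  Set.mem_iUnion.2 ⟨n, h⟩

end Percolation

section Claims

open Plane

variable {K : Set E} {s C : ℝ} {D D' : Set E} {v y z z₀ : E}

lemma IsExtension.image_negHalf_subset (hExt : IsExtension s v D D') (hK : NiceK K)
    (hND : IsNondeg s C (Ks K s) (rKs K s) D) (hC : 1 ≤ C) (hs : 2 ≤ s)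
    (hL : 10 * s ^ 3 ≤ C ^ ((1 : ℝ) / 3)) (hv : v ∈ quasiStable s) (hy : y ∈ (D' \ D) ∩ latt) :
    (fun k => y + k) '' negHalf (Ks K s) v ⊆ ((fun k => y + k) '' Ks K s) ∩ (D ∩ latt) := by
  rintro _ ⟨k, hk, rfl⟩
  have hks : ‖k‖ ≤ s := (norm_le_of_mem_Ks hK hk.1).trans_eq (abs_of_pos (by linarith))
  exact ⟨⟨k, hk.1, rfl⟩, hExt.add_mem hND hC hs hL hv hy hk.1.2 hks hk.2, latt_add hy.2 hk.1.2⟩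

lemma subset_bpClIn_of_notMem_stableDirs (hK : NiceK K) (hC : 1 ≤ C) (hs : 2 ≤ s)
    (hL : 10 * s ^ 3 ≤ C ^ ((1 : ℝ) / 3)) (hv : v ∈ quasiStable s \ stableDirs (Ks K s) (rKs K s))
    (hND : IsNondeg s C (Ks K s) (rKs K s) D) (hExt : IsExtension s v D D') :
    D' ∩ latt ⊆ bpClIn (Ks K s) (rKs K s) (D' \ D) D := by
  intro y hy
  by_cases hyD : y ∈ D
  · exact mem_bpClIn_of_mem_iterate (n := 0) ⟨hyD, hy.2⟩
  have hyR : y ∈ (D' \ D) ∩ latt := ⟨⟨hy.1, hyD⟩, hy.2⟩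
  refine mem_bpClIn_of_mem_iterate (n := 1) (mem_stepIn_of_subset (Ks_finite hK) hyR
    (hExt.image_negHalf_subset hK hND hC hs hL hv.1 hyR) ?_)
  rw [Set.ncard_image_of_injective _ (add_right_injective y)]
  exact not_lt.1 fun h => hv.2 ⟨hv.1.1, h⟩

lemma IsExtension.mem_stepIn (hExt : IsExtension s v D D') (hK : NiceK K)
    (hND : IsNondeg s C (Ks K s) (rKs K s) D) (hC : 1 ≤ C) (hs : 2 ≤ s)
    (hL : 10 * s ^ 3 ≤ C ^ ((1 : ℝ) / 3)) (hv : v ∈ quasiStable s) (hz : z ∈ (D' \ D) ∩ latt)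
    {A : Set E} (hDA : D ∩ latt ⊆ A) {z' : E} (hz'A : z' ∈ A) (hz'D : z' ∉ D)
    (hzz' : z' - z ∈ Ks K s) : z ∈ stepIn (Ks K s) (rKs K s) (D' \ D) A := by
  have himage := hExt.image_negHalf_subset hK hND hC hs hL hv hz
  refine mem_stepIn_of_subset (Ks_finite hK) hz (S := (fun k => z + k) '' negHalf (Ks K s) v ∪ {z'})
    (Set.union_subset (himage.trans (Set.inter_subset_inter_right _ hDA))
      (Set.singleton_subset_iff.2 ⟨⟨z' - z, hzz', add_sub_cancel z z'⟩, hz'A⟩)) ?_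
  rw [Set.ncard_union_eq (Set.disjoint_singleton_right.2 fun h => hz'D (himage h).2.1)
    (((Ks_finite hK).subset fun k hk => hk.1).image _), Set.ncard_singleton,
    Set.ncard_image_of_injective _ (add_right_injective z)]
  exact rKs_le_ncard_negHalf_add_one fun h => by simpa [h] using hv.1

lemma IsExtension.inner_eq (hExt : IsExtension s v D D') (hD : IsDropletQ s D)
    (hz : z ∈ (D' \ D) ∩ latt) (hz₀ : z₀ ∈ (D' \ D) ∩ latt) : ⟪z, v⟫ = ⟪z₀, v⟫ :=
  le_antisymm (hExt.inner_le hD hz hz₀.2 hz₀.1.2 (hExt.mem_ehs_tight hz₀.1.1))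
    (hExt.inner_le hD hz₀ hz.2 hz.1.2 (hExt.mem_ehs_tight hz.1.1))

lemma IsExtension.mem_of_inner_eq (hExt : IsExtension s v D D') (hD : IsDropletQ s D)
    (hz₀ : z₀ ∈ (D' \ D) ∩ latt) (hz : z ∈ D') (hzl : z ∈ latt) (hzv : ⟪z, v⟫ = ⟪z₀, v⟫) :
    z ∈ (D' \ D) ∩ latt :=
  ⟨⟨hz, fun hzD => (hD.inner_lt (hExt.mem_ehs_tight hz₀.1.1) hz₀.1.2 hzD).ne hzv⟩, hzl⟩

/-- Each site of the row `z₀ + ℕ p` is infected one step after its predecessor, which supplies its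
`r`-th infected neighbour. -/
lemma IsExtension.add_nsmul_mem_iterate (hExt : IsExtension s v D D') (hK : NiceK K)
    (hND : IsNondeg s C (Ks K s) (rKs K s) D) (hC : 1 ≤ C) (hs : 2 ≤ s)
    (hL : 10 * s ^ 3 ≤ C ^ ((1 : ℝ) / 3)) (hv : v ∈ quasiStable s)
    (hz₀ : z₀ ∈ (D' \ D) ∩ latt) {A : Set E} (hDA : D ∩ latt ⊆ A)
    (hz₀A : z₀ ∈ stepIn (Ks K s) (rKs K s) (D' \ D) A) {p : E} (hp : p ∈ Ks K s)
    (hpv : ⟪p, v⟫ = 0) (n : ℕ) (hn : z₀ + (n : ℝ) • p ∈ D') :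
    z₀ + (n : ℝ) • p ∈ (stepIn (Ks K s) (rKs K s) (D' \ D))^[n + 1] A := by
  have hrow : ∀ m : ℕ, z₀ + (m : ℝ) • p ∈ D' → z₀ + (m : ℝ) • p ∈ (D' \ D) ∩ latt :=
    fun m hm => hExt.mem_of_inner_eq hND.1 hz₀ hm
      (latt_add hz₀.2 (by exact_mod_cast latt_zsmul m hp.2))
      (by rw [inner_add_left, real_inner_smul_left, hpv, mul_zero, add_zero])
  induction n with
  | zero => simpa using hz₀A
  | succ n ih =>
    have hprev : z₀ + (n : ℝ) • p ∈ D' := by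
      have h := hExt.convex.add_smul_mem hz₀.1.1 hn (t := n / (n + 1))
        ⟨by positivity, div_le_one_of_le₀ (by linarith) (by positivity)⟩
      rwa [smul_smul, Nat.cast_succ, div_mul_cancel₀ _ (by positivity)] at h
    rw [Function.iterate_succ_apply']
    refine hExt.mem_stepIn hK hND hC hs hL hv (hrow _ hn)
      ((subset_iterate_stepIn _).trans' hDA) (ih hprev) (hrow n hprev).1.2 ?_
    simpa [Nat.cast_succ, add_smul] using neg_mem_Ks hK hp

lemma subset_bpClIn_of_mem_stableDirs (hK : NiceK K) (hC : 1 ≤ C) (hs : 2 ≤ s)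
    (hL : 10 * s ^ 3 ≤ C ^ ((1 : ℝ) / 3)) (hv : v ∈ quasiStable s ∩ stableDirs (Ks K s) (rKs K s))
    (hND : IsNondeg s C (Ks K s) (rKs K s) D) (hExt : IsExtension s v D D') {x : E}
    (hx : x ∈ (((D' \ D) ∩ latt) + Ks K s) \ D) :
    D' ∩ latt ⊆ bpClIn (Ks K s) (rKs K s) (D' \ D) ({x} ∪ D) := by
  obtain ⟨z₀, hz₀, k₀, hk₀, rfl⟩ := hx.1
  have hDA : D ∩ latt ⊆ ({z₀ + k₀} ∪ D) ∩ latt := Set.inter_subset_inter_left _ subset_union_right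
  have hz₀A := hExt.mem_stepIn hK hND hC hs hL hv.1 hz₀ hDA
    ⟨.inl rfl, latt_add hz₀.2 hk₀.2⟩ hx.2 (by rwa [add_sub_cancel_left])
  obtain ⟨p, hp, hpv, hgen⟩ := exists_latt_inner_eq_zero_eq_zsmul hv.1
  obtain ⟨q, hq, hq0, hqv⟩ := exists_inner_eq_zero_of_mem_stableDirs hK hs hv.2
  obtain ⟨m₀, rfl⟩ := hgen q hq.2 hqv
  have hpK : p ∈ Ks K s := mem_Ks_of_zsmul_mem hK hp (by rintro rfl; simp at hq0) hq
  intro y hy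
  by_cases hyD : y ∈ D
  · exact mem_bpClIn_of_mem_iterate (n := 0) ⟨.inr hyD, hy.2⟩
  have hyR : y ∈ (D' \ D) ∩ latt := ⟨⟨hy.1, hyD⟩, hy.2⟩
  obtain ⟨m, hm⟩ := hgen (y - z₀) (latt_sub hy.2 hz₀.2)
    (by rw [inner_sub_left, hExt.inner_eq hND.1 hyR hz₀, sub_self])
  rw [← add_sub_cancel z₀ y, hm] at hy ⊢
  obtain ⟨n, rfl | rfl⟩ := Int.eq_nat_or_neg m
  · refine mem_bpClIn_of_mem_iterate (n := n + 1) ?_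
    exact_mod_cast hExt.add_nsmul_mem_iterate hK hND hC hs hL hv.1 hz₀ hDA hz₀A hpK hpv n
      (by exact_mod_cast hy.1)
  · rw [Int.cast_neg, Int.cast_natCast, neg_smul, ← smul_neg] at hy ⊢
    exact mem_bpClIn_of_mem_iterate (hExt.add_nsmul_mem_iterate hK hND hC hs hL hv.1 hz₀ hDA hz₀A
      (neg_mem_Ks hK hpK) (by rw [inner_neg_left, hpv, neg_zero]) n hy.1)

end Claims

theorem statement_13 (K : Set E) (hK : NiceK K) :
    ∃ s₀ : ℝ, ∀ s : ℝ, s₀ ≤ s → ∃ C₀ : ℝ, ∀ C : ℝ, C₀ ≤ C →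
      (∀ v ∈ quasiStable s \ stableDirs (Ks K s) (rKs K s), ∀ D D' : Set E,
        IsNondeg s C (Ks K s) (rKs K s) D → IsExtension s v D D' →
        D' ∩ latt ⊆ bpClIn (Ks K s) (rKs K s) (D' \ D) D) ∧
      (∀ v ∈ quasiStable s ∩ stableDirs (Ks K s) (rKs K s), ∀ D D' : Set E,
        IsNondeg s C (Ks K s) (rKs K s) D → IsExtension s v D D' →
        ∀ x ∈ ((((D' \ D) ∩ latt) + Ks K s) \ D),
          D' ∩ latt ⊆ bpClIn (Ks K s) (rKs K s) (D' \ D) ({x} ∪ D)) := by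
  refine ⟨2, fun s hs => ⟨(10 * s ^ 3) ^ 3, fun C hC => ?_⟩⟩
  have hs3 : 1 ≤ 10 * s ^ 3 := by nlinarith [pow_le_pow_left₀ (by norm_num) hs 3]
  have hL : 10 * s ^ 3 ≤ C ^ ((1 : ℝ) / 3) := by
    have h := Real.rpow_le_rpow (by positivity) hC (by norm_num : (0 : ℝ) ≤ 1 / 3)
    rwa [← Real.rpow_natCast, ← Real.rpow_mul (by positivity), Nat.cast_ofNat,
      mul_one_div_cancel three_ne_zero, Real.rpow_one] at h
  have hC1 : 1 ≤ C := (one_le_pow₀ hs3).trans hC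
  exact ⟨fun v hv D D' hND hExt => subset_bpClIn_of_notMem_stableDirs hK hC1 hs hL hv hND hExt,
    fun v hv D D' hND hExt x hx => subset_bpClIn_of_mem_stableDirs hK hC1 hs hL hv hND hExt hx⟩
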